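/- Proposition 1 (ISAB is permutation-equivariant): fix a matrix of inducing points I ∈ ℝ^{m×d} and define ISAB(X) = MAB(X, MAB(I, X)) for X ∈ ℝ^{n×d}. Then for every X ∈ ℝ^{n×d} and every permutation σ of {1,…,n}, ISAB(Π_σ X) = Π_σ ISAB(X). -/

import Mathlib

open Matrix

/-- The `n × n` permutation matrix of `σ`: `(permMat σ * X) i j = X (σ i) j`,
i.e. row `i` of `Π_σ X` is row `σ(i)` of `X`. -/
noncomputable def permMat {n : ℕ} (σ : Equiv.Perm (Fin n)) : Matrix (Fin n) (Fin n) ℝ :=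
  Matrix.of fun i j => if σ i = j then (1 : ℝ) else 0

/-- Row-wise softmax: `softmax M i j = exp (M i j) / ∑ k, exp (M i k)`. -/
noncomputable def softmax {n m : ℕ} (M : Matrix (Fin n) (Fin m) ℝ) : Matrix (Fin n) (Fin m) ℝ :=
  Matrix.of fun i j => Real.exp (M i j) / ∑ k, Real.exp (M i k)

/-- Single-head attention: `Attn Q K V = softmax (Q Kᵀ / √d) ⬝ V`. -/
noncomputable def Attn {n m d : ℕ} (Q : Matrix (Fin n) (Fin d) ℝ)
    (K V : Matrix (Fin m) (Fin d) ℝ) : Matrix (Fin n) (Fin d) ℝ :=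
  softmax ((1 / Real.sqrt d) • (Q * Kᵀ)) * V

/-- Apply a function `φ : ℝᵈ → ℝᵈ` independently to every row of a matrix. -/
def rowMap {n d : ℕ} (φ : (Fin d → ℝ) → (Fin d → ℝ)) (X : Matrix (Fin n) (Fin d) ℝ) :
    Matrix (Fin n) (Fin d) ℝ :=
  Matrix.of fun i => φ (X i)

/-- Multihead Attention Block with row-wise maps `φ, ψ` (the LayerNorms) and `F`
(the feed-forward network): `MAB X Y = ψ(H + F(H))` where `H = φ(X + Attn(X, Y, Y))`. -/
noncomputable def MAB {n m d : ℕ} (φ ψ F : (Fin d → ℝ) → (Fin d → ℝ))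
    (X : Matrix (Fin n) (Fin d) ℝ) (Y : Matrix (Fin m) (Fin d) ℝ) :
    Matrix (Fin n) (Fin d) ℝ :=
  rowMap ψ (rowMap φ (X + Attn X Y Y) + rowMap F (rowMap φ (X + Attn X Y Y)))

/-- Induced Set Attention Block with inducing points `I`:
`ISAB X = MAB(X, MAB(I, X))`, where the two MAB occurrences carry distinct
row-wise maps `φ₁, ψ₁, F₁` and `φ₂, ψ₂, F₂`. -/
noncomputable def ISAB {n m d : ℕ} (φ₁ ψ₁ F₁ φ₂ ψ₂ F₂ : (Fin d → ℝ) → (Fin d → ℝ))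
    (I : Matrix (Fin m) (Fin d) ℝ) (X : Matrix (Fin n) (Fin d) ℝ) :
    Matrix (Fin n) (Fin d) ℝ :=
  MAB φ₂ ψ₂ F₂ X (MAB φ₁ ψ₁ F₁ I X)


/-!
Each block acts on the rows of its first argument one at a time, so permuting those rows
permutes the output. Its second argument enters only through attention, whose value is a
softmax-weighted sum over the key/value rows; permuting keys and values together merely
reorders that sum and the softmax normalisation, so the inner block `MAB(I, Π_σ X)` is
unchanged.
-/

lemma permMat_eq_toMatrix {n : ℕ} (σ : Equiv.Perm (Fin n)) :
    permMat σ = σ.toPEquiv.toMatrix := by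
  ext i j
  simp [permMat, PEquiv.toMatrix_apply, eq_comm]

lemma permMat_mul {n k : ℕ} (σ : Equiv.Perm (Fin n)) (X : Matrix (Fin n) (Fin k) ℝ) :
    permMat σ * X = X.submatrix σ id := by
  rw [permMat_eq_toMatrix, PEquiv.toMatrix_toPEquiv_mul]

lemma softmax_submatrix {n n' m m' : ℕ} (M : Matrix (Fin n) (Fin m) ℝ) (r : Fin n' → Fin n)
    (e : Fin m' ≃ Fin m) : softmax (M.submatrix r e) = (softmax M).submatrix r e := by
  ext i j
  simp only [softmax, Matrix.of_apply, Matrix.submatrix_apply,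
    e.sum_comp (fun k => Real.exp (M (r i) k))]

lemma Attn_submatrix_right {n m m' d : ℕ} (Q : Matrix (Fin n) (Fin d) ℝ)
    (K V : Matrix (Fin m) (Fin d) ℝ) (e : Fin m' ≃ Fin m) :
    Attn Q (K.submatrix e id) (V.submatrix e id) = Attn Q K V := by
  have hscores : (1 / √d) • (Q * (K.submatrix e id)ᵀ) = ((1 / √d) • (Q * Kᵀ)).submatrix id e :=
    rfl
  rw [Attn, Attn, hscores, softmax_submatrix, Matrix.submatrix_mul_equiv, Matrix.submatrix_id_id]

lemma MAB_submatrix_left {n n' m d : ℕ} (φ ψ F : (Fin d → ℝ) → (Fin d → ℝ))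
    (X : Matrix (Fin n) (Fin d) ℝ) (Y : Matrix (Fin m) (Fin d) ℝ) (r : Fin n' → Fin n) :
    MAB φ ψ F (X.submatrix r id) Y = (MAB φ ψ F X Y).submatrix r id :=
  rfl

lemma MAB_submatrix_right {n m m' d : ℕ} (φ ψ F : (Fin d → ℝ) → (Fin d → ℝ))
    (X : Matrix (Fin n) (Fin d) ℝ) (Y : Matrix (Fin m) (Fin d) ℝ) (e : Fin m' ≃ Fin m) :
    MAB φ ψ F X (Y.submatrix e id) = MAB φ ψ F X Y := by
  rw [MAB, MAB, Attn_submatrix_right]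

/-- Proposition 1: ISAB is permutation-equivariant: `ISAB (Π_σ X) = Π_σ (ISAB X)`. -/
theorem ISAB_equivariant {n m d : ℕ} (φ₁ ψ₁ F₁ φ₂ ψ₂ F₂ : (Fin d → ℝ) → (Fin d → ℝ))
    (I : Matrix (Fin m) (Fin d) ℝ) (X : Matrix (Fin n) (Fin d) ℝ) (σ : Equiv.Perm (Fin n)) :
    ISAB φ₁ ψ₁ F₁ φ₂ ψ₂ F₂ I (permMat σ * X) = permMat σ * ISAB φ₁ ψ₁ F₁ φ₂ ψ₂ F₂ I X := by
  rw [permMat_mul, permMat_mul, ISAB, ISAB, MAB_submatrix_right, MAB_submatrix_left]
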